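/- arXiv:2502.15502 — 4 statements merged into one kernel-verified Lean document; each statement's English description precedes it below -/
import Mathlib

section
/- Let f₀(z) = (1, a z, z²) with a ∈ ℂ∖{0}, and define f₁ = ∂f₀/∂z − (⟨∂f₀/∂z, f₀⟩/‖f₀‖²)·f₀. Then ‖f₁(z)‖² = (4|z|² + |a|²(1+|z|⁴))/(1 + |a|²|z|² + |z|⁴), and consequently γ₀ := ‖f₁‖²/‖f₀‖² = (4|z|² + |a|²(1+|z|⁴))/(1 + |a|²|z|² + |z|⁴)². -/
open Complex Finset

/-- For `f₀(z) = (1, az, z²)` (`a ≠ 0`) and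
`f₁ = ∂f₀/∂z − (⟨∂f₀/∂z, f₀⟩/‖f₀‖²)·f₀`, one has
`‖f₁‖² = (4|z|²+|a|²(1+|z|⁴))/(1+|a|²|z|²+|z|⁴)` and
`γ₀ = ‖f₁‖²/‖f₀‖² = (4|z|²+|a|²(1+|z|⁴))/(1+|a|²|z|²+|z|⁴)²`. -/
theorem f1_norm_and_gamma0 (a : ℂ) (ha : a ≠ 0) :
    let f₀ : ℂ → Fin 3 → ℂ := fun z => ![1, a * z, z ^ 2]
    let df₀ : ℂ → Fin 3 → ℂ := fun z i => deriv (fun w => f₀ w i) z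
    let f₁ : ℂ → Fin 3 → ℂ := fun z i =>
      df₀ z i - ((∑ l : Fin 3, df₀ z l * (starRingEnd ℂ) (f₀ z l)) /
        ((∑ l : Fin 3, Complex.normSq (f₀ z l) : ℝ) : ℂ)) * f₀ z i
    (∀ z : ℂ, ∑ i : Fin 3, Complex.normSq (f₁ z i) =
        (4 * Complex.normSq z + Complex.normSq a * (1 + Complex.normSq z ^ 2)) /
          (1 + Complex.normSq a * Complex.normSq z + Complex.normSq z ^ 2)) ∧
    (∀ z : ℂ, (∑ i : Fin 3, Complex.normSq (f₁ z i)) /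
        (∑ i : Fin 3, Complex.normSq (f₀ z i)) =
        (4 * Complex.normSq z + Complex.normSq a * (1 + Complex.normSq z ^ 2)) /
          (1 + Complex.normSq a * Complex.normSq z + Complex.normSq z ^ 2) ^ 2) := by
  intro f₀ df₀ f₁
  have hdf : ∀ z : ℂ, df₀ z = ![0, a, 2 * z] := by
    intro z; funext i; fin_cases i
    · show deriv (fun _ : ℂ => (1 : ℂ)) z = 0
      simp
    · show deriv (fun w : ℂ => a * w) z = a
      simpa using ((hasDerivAt_id z).const_mul a).deriv
    · show deriv (fun w : ℂ => w ^ 2) z = 2 * z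
      simp
  have hDsum : ∀ z : ℂ, (∑ l : Fin 3, Complex.normSq (f₀ z l)) =
      1 + Complex.normSq a * Complex.normSq z + Complex.normSq z ^ 2 := by
    intro z
    simp [f₀, Fin.sum_univ_three, Complex.normSq_mul, map_pow]
  have key : ∀ z : ℂ, ∑ i : Fin 3, Complex.normSq (f₁ z i) =
      (4 * Complex.normSq z + Complex.normSq a * (1 + Complex.normSq z ^ 2)) /
        (1 + Complex.normSq a * Complex.normSq z + Complex.normSq z ^ 2) := by
    intro z
    have hD0 : (0 : ℝ) < 1 + Complex.normSq a * Complex.normSq z + Complex.normSq z ^ 2 := by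
      nlinarith [Complex.normSq_nonneg a, Complex.normSq_nonneg z, sq_nonneg (Complex.normSq z)]
    set D : ℝ := 1 + Complex.normSq a * Complex.normSq z + Complex.normSq z ^ 2 with hDdef
    have hDC0 : (D : ℂ) ≠ 0 := by exact_mod_cast hD0.ne'
    set S : ℂ := ∑ l : Fin 3, df₀ z l * (starRingEnd ℂ) (f₀ z l) with hS
    have hf1 : ∀ i, f₁ z i = (df₀ z i * (D : ℂ) - S * f₀ z i) / (D : ℂ) := by
      intro i
      show df₀ z i - (S / ((∑ l : Fin 3, Complex.normSq (f₀ z l) : ℝ) : ℂ)) * f₀ z i = _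
      rw [hDsum z, ← hDdef]
      field_simp
    have step : ∑ i : Fin 3, Complex.normSq (f₁ z i) =
        (∑ i : Fin 3, Complex.normSq (df₀ z i * (D : ℂ) - S * f₀ z i)) / D ^ 2 := by
      simp only [hf1, Complex.normSq_div, Complex.normSq_ofReal, ← Finset.sum_div, ← pow_two]
    rw [step, div_eq_div_iff (by positivity) hD0.ne']
    rw [hS, hdf z]
    simp only [f₀, Fin.sum_univ_three, Matrix.cons_val_zero, Matrix.cons_val_one,
      Matrix.head_cons, Matrix.cons_val_two, Matrix.tail_cons, hDdef]
    simp only [Complex.normSq_apply, Complex.sub_re, Complex.sub_im, Complex.mul_re,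
      Complex.mul_im, Complex.add_re, Complex.add_im, Complex.ofReal_re, Complex.ofReal_im,
      Complex.conj_re, Complex.conj_im, Complex.one_re, Complex.one_im, Complex.zero_re,
      Complex.zero_im, Complex.re_ofNat, Complex.im_ofNat, pow_two]
    ring
  refine ⟨key, fun z => ?_⟩
  rw [key z, hDsum z, div_div, ← pow_two]
end

section
/- For f₀(z) = (1, 0, 2z, 2z², z²) and g₀(z) = (0, 1, 0, z², 0) in ℂ⁵, the squared norm of the wedge product satisfies ‖f₀ ∧ g₀‖² = (1+|z|²)⁴, and hence ∂²/∂z∂z̄ log‖f₀ ∧ g₀‖² = 4/(1+|z|²)². -/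
/-!
The polynomial `‖f₀ ∧ g₀‖²` in `z, z̄` factors as `(1 + |z|²)⁴`, so `log ‖f₀ ∧ g₀‖²` is four
times the Fubini–Study potential `log (1 + |z|²)`. Its `∂_z` is `z̄ / (1 + |z|²)`, whose `∂_z̄` is
`1 / (1 + |z|²)²` by the Leibniz rule, using `∂_z̄ z̄ = 1` and `z̄ z = |z|²`.
-/

open Complex Finset

/-- Wirtinger derivative ∂/∂z of a function ℂ → ℂ. -/
noncomputable def wdz (f : ℂ → ℂ) (z : ℂ) : ℂ :=
  (fderiv ℝ f z 1 - Complex.I * fderiv ℝ f z Complex.I) / 2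

/-- Wirtinger derivative ∂/∂z̄ of a function ℂ → ℂ. -/
noncomputable def wdzbar (f : ℂ → ℂ) (z : ℂ) : ℂ :=
  (fderiv ℝ f z 1 + Complex.I * fderiv ℝ f z Complex.I) / 2

/-- Square norm of the wedge of two vectors in ℂ⁵ (Cauchy–Binet):
`‖f ∧ g‖² = ‖f‖²‖g‖² − |⟨f,g⟩|²`. -/
noncomputable def wedgeNormSq (f g : Fin 5 → ℂ) : ℝ :=
  (∑ i, Complex.normSq (f i)) * (∑ i, Complex.normSq (g i)) -
    Complex.normSq (∑ i, f i * (starRingEnd ℂ) (g i))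

open ComplexConjugate

section Wirtinger

variable {f g : ℂ → ℂ} {z : ℂ}

theorem wdz_const_mul (c : ℂ) :
    wdz (fun w => c * f w) z = c * wdz f z := by
  rw [wdz, wdz, show (fun w => c * f w) = c • f from rfl, fderiv_const_smul_field]
  simp only [Pi.smul_apply, FunLike.coe_smul, smul_eq_mul]
  ring

theorem wdzbar_const_mul (c : ℂ) :
    wdzbar (fun w => c * f w) z = c * wdzbar f z := by
  rw [wdzbar, wdzbar, show (fun w => c * f w) = c • f from rfl, fderiv_const_smul_field]
  simp only [Pi.smul_apply, FunLike.coe_smul, smul_eq_mul]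
  ring

theorem wdzbar_mul (hf : DifferentiableAt ℝ f z) (hg : DifferentiableAt ℝ g z) :
    wdzbar (fun w => f w * g w) z = wdzbar f z * g z + f z * wdzbar g z := by
  rw [wdzbar, wdzbar, wdzbar, show (fun w => f w * g w) = f * g from rfl,
    (hf.hasFDerivAt.mul hg.hasFDerivAt).fderiv]
  simp only [FunLike.coe_add, Pi.add_apply, FunLike.coe_smul, Pi.smul_apply,
    smul_eq_mul]
  ring

theorem wdzbar_conj : wdzbar (fun w => conj w) z = 1 := by
  rw [wdzbar, show (fun w => conj w) = conjCLE from rfl, conjCLE.fderiv]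
  simp

theorem HasFDerivAt.wdz_ofReal {φ : ℂ → ℝ} {φ' : ℂ →L[ℝ] ℝ} (h : HasFDerivAt φ φ' z) :
    wdz (fun w => (φ w : ℂ)) z = (φ' 1 - I * φ' I) / 2 := by
  rw [wdz, show (fun w => (φ w : ℂ)) = ofRealCLM ∘ φ from rfl,
    (ofRealCLM.hasFDerivAt.comp z h).fderiv]
  rfl

theorem HasFDerivAt.wdzbar_ofReal {φ : ℂ → ℝ} {φ' : ℂ →L[ℝ] ℝ} (h : HasFDerivAt φ φ' z) :
    wdzbar (fun w => (φ w : ℂ)) z = (φ' 1 + I * φ' I) / 2 := by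
  rw [wdzbar, show (fun w => (φ w : ℂ)) = ofRealCLM ∘ φ from rfl,
    (ofRealCLM.hasFDerivAt.comp z h).fderiv]
  rfl

end Wirtinger

theorem hasFDerivAt_normSq (z : ℂ) : HasFDerivAt normSq (2 • innerSL ℝ z) z := by
  rw [show (normSq : ℂ → ℝ) = fun w => ‖w‖ ^ 2 from funext normSq_eq_norm_sq]
  exact (hasStrictFDerivAt_norm_sq z).hasFDerivAt

theorem real_inner_one_right (z : ℂ) : inner ℝ z 1 = z.re := by
  simp [Complex.inner]

theorem real_inner_I_right (z : ℂ) : inner ℝ z I = z.im := by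
  simp [Complex.inner]

theorem one_add_normSq_pos (z : ℂ) : 0 < 1 + normSq z :=
  add_pos_of_pos_of_nonneg one_pos (normSq_nonneg z)

theorem wdz_log_one_add_normSq (z : ℂ) :
    wdz (fun w => (Real.log (1 + normSq w) : ℂ)) z = conj z * ((1 + normSq z)⁻¹ : ℝ) := by
  rw [(((hasFDerivAt_normSq z).const_add 1).log (one_add_normSq_pos z).ne').wdz_ofReal,
    ← re_add_im (conj z)]
  simp only [FunLike.coe_smul, Pi.smul_apply]
  simp only [innerSL_apply_apply, real_inner_one_right, real_inner_I_right, smul_eq_mul,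
    nsmul_eq_mul, conj_re, conj_im]
  push_cast
  ring

theorem hasFDerivAt_inv_one_add_normSq (z : ℂ) :
    HasFDerivAt (fun w => (1 + normSq w)⁻¹) (-((1 + normSq z) ^ 2)⁻¹ • 2 • innerSL ℝ z) z :=
  (hasDerivAt_inv (one_add_normSq_pos z).ne').comp_hasFDerivAt z
    ((hasFDerivAt_normSq z).const_add 1)

theorem wdzbar_inv_one_add_normSq (z : ℂ) :
    wdzbar (fun w => (((1 + normSq w)⁻¹ : ℝ) : ℂ)) z = -z * (((1 + normSq z) ^ 2)⁻¹ : ℝ) := by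
  rw [(hasFDerivAt_inv_one_add_normSq z).wdzbar_ofReal]
  conv_rhs => arg 1; rw [← re_add_im z]
  simp only [FunLike.coe_smul, Pi.smul_apply]
  simp only [innerSL_apply_apply, real_inner_one_right, real_inner_I_right, smul_eq_mul,
    nsmul_eq_mul]
  push_cast
  ring

theorem wdzbar_conj_mul_inv_one_add_normSq (z : ℂ) :
    wdzbar (fun w => conj w * (((1 + normSq w)⁻¹ : ℝ) : ℂ)) z =
      (((1 + normSq z) ^ 2)⁻¹ : ℝ) := by
  have hconj : DifferentiableAt ℝ (fun w => conj w) z := conjCLE.differentiableAt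
  have hinv : DifferentiableAt ℝ (fun w => (((1 + normSq w)⁻¹ : ℝ) : ℂ)) z :=
    ofRealCLM.differentiableAt.comp z (hasFDerivAt_inv_one_add_normSq z).differentiableAt
  rw [wdzbar_mul hconj hinv, wdzbar_conj, wdzbar_inv_one_add_normSq, ← mul_assoc, mul_neg,
    ← normSq_eq_conj_mul_self]
  have hpos : (1 + normSq z : ℂ) ≠ 0 := by exact_mod_cast (one_add_normSq_pos z).ne'
  push_cast
  field_simp
  ring

theorem wedgeNormSq_f₀_g₀ (z : ℂ) :
    wedgeNormSq ![1, 0, 2 * z, 2 * z ^ 2, z ^ 2] ![0, 1, 0, z ^ 2, 0] = (1 + normSq z) ^ 4 := by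
  simp only [wedgeNormSq, Fin.sum_univ_five, Fin.isValue, Matrix.cons_val_zero, map_one,
    Matrix.cons_val_one, map_zero, add_zero, Matrix.cons_val, normSq_mul, normSq_ofNat, map_pow,
    zero_add, mul_zero, mul_one, normSq_conj]
  ring

/-- For `f₀ = (1,0,2z,2z²,z²)` and `g₀ = (0,1,0,z²,0)`:
`‖f₀∧g₀‖² = (1+|z|²)⁴` and `∂²/∂z∂z̄ log‖f₀∧g₀‖² = 4/(1+|z|²)²`. -/
theorem wedge_norm_and_gamma0 :
    let f₀ : ℂ → Fin 5 → ℂ := fun z => ![1, 0, 2 * z, 2 * z ^ 2, z ^ 2]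
    let g₀ : ℂ → Fin 5 → ℂ := fun z => ![0, 1, 0, z ^ 2, 0]
    (∀ z : ℂ, wedgeNormSq (f₀ z) (g₀ z) = (1 + Complex.normSq z) ^ 4) ∧
    (∀ z : ℂ,
      wdzbar (wdz (fun w => (Real.log (wedgeNormSq (f₀ w) (g₀ w)) : ℂ))) z =
        ((4 / (1 + Complex.normSq z) ^ 2 : ℝ) : ℂ)) := by
  intro f₀ g₀
  refine ⟨wedgeNormSq_f₀_g₀, fun z => ?_⟩
  have hlog : (fun w => (Real.log (wedgeNormSq (f₀ w) (g₀ w)) : ℂ)) =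
      fun w => 4 * (Real.log (1 + normSq w) : ℂ) := by
    funext w
    rw [wedgeNormSq_f₀_g₀, Real.log_pow]
    push_cast
    rfl
  have hwdz : wdz (fun w => (Real.log (wedgeNormSq (f₀ w) (g₀ w)) : ℂ)) =
      fun w => 4 * (conj w * ((1 + normSq w)⁻¹ : ℝ)) := by
    funext w
    rw [hlog, wdz_const_mul, wdz_log_one_add_normSq]
  rw [hwdz, wdzbar_const_mul, wdzbar_conj_mul_inv_one_add_normSq, div_eq_mul_inv]
  push_cast
  rfl
end

section
/- For f₀(z) = (1, 0, −√6 z², −2z³, −3z⁴) and g₀(z) = (0, 1, √6 z, 3z², 4z³) in ℂ⁵, one has ∂²/∂z∂z̄ log‖f₀ ∧ g₀‖² = 6/(1+|z|²)². -/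
/-
Expanding, ‖f₀ ∧ g₀‖² = (1 + |z|²)⁶, so the left-hand side is ∂∂̄ of 6 log(1 + z z̄).
Writing a function of z as φ(z, z̄) with φ holomorphic in two variables, ∂ and ∂̄ become the
two partial derivatives of φ, and ∂_b ∂_a 6 log(1 + a b) = 6 / (1 + a b)² at b = ā.
-/

open Complex Finset

open ComplexConjugate

section Partial

variable {𝕜 F : Type*} [NontriviallyNormedField 𝕜] [NormedAddCommGroup F] [NormedSpace 𝕜 F]
  {φ : 𝕜 × 𝕜 → F} {a b : 𝕜}

theorem DifferentiableAt.deriv_comp_left_prod (h : DifferentiableAt 𝕜 φ (a, b)) :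
    deriv (fun x => φ (x, b)) a = fderiv 𝕜 φ (a, b) (1, 0) :=
  (h.hasFDerivAt.comp_hasDerivAt a ((hasDerivAt_id a).prodMk (hasDerivAt_const a b))).deriv

theorem DifferentiableAt.deriv_comp_right_prod (h : DifferentiableAt 𝕜 φ (a, b)) :
    deriv (fun y => φ (a, y)) b = fderiv 𝕜 φ (a, b) (0, 1) :=
  (h.hasFDerivAt.comp_hasDerivAt b ((hasDerivAt_const b a).prodMk (hasDerivAt_id b))).deriv

end Partial

section Polarization

variable {φ : ℂ × ℂ → ℂ} {z : ℂ}

theorem hasFDerivAt_comp_prod_conj (h : DifferentiableAt ℂ φ (z, conj z)) :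
    HasFDerivAt (fun w => φ (w, conj w))
      ((fderiv ℂ φ (z, conj z)).restrictScalars ℝ ∘L
        (ContinuousLinearMap.id ℝ ℂ).prod conjCLE.toContinuousLinearMap) z :=
  h.hasFDerivAt.restrictScalars ℝ |>.comp z
    ((ContinuousLinearMap.id ℝ ℂ).prod conjCLE.toContinuousLinearMap).hasFDerivAt

theorem fderiv_comp_prod_conj_one (h : DifferentiableAt ℂ φ (z, conj z)) :
    fderiv ℝ (fun w => φ (w, conj w)) z 1 =
      fderiv ℂ φ (z, conj z) (1, 0) + fderiv ℂ φ (z, conj z) (0, 1) := by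
  rw [(hasFDerivAt_comp_prod_conj h).fderiv, ← map_add]
  simp

theorem fderiv_comp_prod_conj_I (h : DifferentiableAt ℂ φ (z, conj z)) :
    fderiv ℝ (fun w => φ (w, conj w)) z I =
      I * fderiv ℂ φ (z, conj z) (1, 0) - I * fderiv ℂ φ (z, conj z) (0, 1) := by
  rw [(hasFDerivAt_comp_prod_conj h).fderiv, ← smul_eq_mul, ← smul_eq_mul, ← map_smul,
    ← map_smul, ← map_sub]
  simp

theorem wdz_comp_prod_conj (h : DifferentiableAt ℂ φ (z, conj z)) :
    wdz (fun w => φ (w, conj w)) z = deriv (fun a => φ (a, conj z)) z := by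
  rw [wdz, fderiv_comp_prod_conj_one h, fderiv_comp_prod_conj_I h, h.deriv_comp_left_prod]
  linear_combination (fderiv ℂ φ (z, conj z) (0, 1) - fderiv ℂ φ (z, conj z) (1, 0)) / 2 * I_sq

theorem wdzbar_comp_prod_conj (h : DifferentiableAt ℂ φ (z, conj z)) :
    wdzbar (fun w => φ (w, conj w)) z = deriv (fun b => φ (z, b)) (conj z) := by
  rw [wdzbar, fderiv_comp_prod_conj_one h, fderiv_comp_prod_conj_I h, h.deriv_comp_right_prod]
  linear_combination (fderiv ℂ φ (z, conj z) (1, 0) - fderiv ℂ φ (z, conj z) (0, 1)) / 2 * I_sq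

end Polarization

theorem one_add_mul_conj_mem_slitPlane (z : ℂ) : 1 + z * conj z ∈ slitPlane := by
  rw [mul_conj, ← ofReal_one, ← ofReal_add, ofReal_mem_slitPlane]
  exact add_pos_of_pos_of_nonneg one_pos (normSq_nonneg z)

theorem wdz_const_mul_log_one_add_mul_conj (c z : ℂ) :
    wdz (fun w => c * log (1 + w * conj w)) z = c * conj z / (1 + z * conj z) := by
  have hz := one_add_mul_conj_mem_slitPlane z
  have hφ : DifferentiableAt ℂ (fun p : ℂ × ℂ => c * log (1 + p.1 * p.2)) (z, conj z) := by
    fun_prop (disch := exact hz)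
  have hd : HasDerivAt (fun a => c * log (1 + a * conj z))
      (c * (conj z / (1 + z * conj z))) z := by
    simpa using (((hasDerivAt_id z).mul_const (conj z)).const_add 1).clog hz |>.const_mul c
  rw [wdz_comp_prod_conj hφ, hd.deriv, mul_div_assoc]

theorem wdzbar_const_mul_conj_div_one_add_mul_conj (c z : ℂ) :
    wdzbar (fun w => c * conj w / (1 + w * conj w)) z = c / (1 + z * conj z) ^ 2 := by
  have hz := slitPlane_ne_zero (one_add_mul_conj_mem_slitPlane z)
  have hφ : DifferentiableAt ℂ (fun p : ℂ × ℂ => c * p.2 / (1 + p.1 * p.2)) (z, conj z) := by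
    fun_prop (disch := exact hz)
  have hd : HasDerivAt (fun b => c * b / (1 + z * b))
      ((c * (1 + z * conj z) - c * conj z * z) / (1 + z * conj z) ^ 2) (conj z) := by
    simpa using ((hasDerivAt_id (conj z)).const_mul c).fun_div
      (((hasDerivAt_id (conj z)).const_mul z).const_add 1) hz
  rw [wdzbar_comp_prod_conj hφ, hd.deriv]
  ring

theorem wedgeNormSq_gamma0 (z : ℂ) :
    wedgeNormSq ![1, 0, -(Real.sqrt 6 : ℂ) * z ^ 2, -2 * z ^ 3, -3 * z ^ 4]
      ![0, 1, (Real.sqrt 6 : ℂ) * z, 3 * z ^ 2, 4 * z ^ 3] = (1 + normSq z) ^ 6 := by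
  have h6 : (Real.sqrt 6 : ℂ) * conj (Real.sqrt 6 : ℂ) = 6 := by
    rw [conj_ofReal, ← ofReal_mul, Real.mul_self_sqrt (by norm_num)]; norm_num
  rw [← ofReal_inj]
  simp only [wedgeNormSq, Fin.sum_univ_five, Matrix.cons_val_zero, Matrix.cons_val_one,
    Matrix.cons_val_two, Matrix.cons_val_three, Matrix.cons_val_four, Matrix.head_cons,
    Matrix.tail_cons]
  push_cast [← mul_conj]
  simp only [map_mul, map_pow, map_neg, map_one, map_zero, map_add, map_ofNat, conj_conj]
  linear_combination (z * conj z + (z * conj z) ^ 2 + (z * conj z) ^ 4 + (z * conj z) ^ 5) * h6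

/-- For `f₀ = (1,0,−√6 z²,−2z³,−3z⁴)` and `g₀ = (0,1,√6 z,3z²,4z³)`:
`∂²/∂z∂z̄ log‖f₀∧g₀‖² = 6/(1+|z|²)²`. -/
theorem wedge_gamma0_degree_six :
    let f₀ : ℂ → Fin 5 → ℂ := fun z =>
      ![1, 0, -(Real.sqrt 6 : ℂ) * z ^ 2, -2 * z ^ 3, -3 * z ^ 4]
    let g₀ : ℂ → Fin 5 → ℂ := fun z =>
      ![0, 1, (Real.sqrt 6 : ℂ) * z, 3 * z ^ 2, 4 * z ^ 3]
    ∀ z : ℂ,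
      wdzbar (wdz (fun w => (Real.log (wedgeNormSq (f₀ w) (g₀ w)) : ℂ))) z =
        ((6 / (1 + Complex.normSq z) ^ 2 : ℝ) : ℂ) := by
  intro f₀ g₀ z
  have hlog : (fun w => (Real.log (wedgeNormSq (f₀ w) (g₀ w)) : ℂ)) =
      fun w => 6 * log (1 + w * conj w) := by
    funext w
    rw [wedgeNormSq_gamma0, Real.log_pow, ofReal_mul,
      ofReal_log (add_nonneg zero_le_one (normSq_nonneg w)), mul_conj]
    push_cast
    rfl
  have hdz : wdz (fun w => 6 * log (1 + w * conj w)) = fun w => 6 * conj w / (1 + w * conj w) :=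
    funext (wdz_const_mul_log_one_add_mul_conj 6)
  rw [hlog, hdz, wdzbar_const_mul_conj_div_one_add_mul_conj, mul_conj]
  push_cast
  rfl
end

section
/- Suppose Q ∈ ℂ[z,w] is a polynomial such that Q(z, z̄) is real and strictly positive for all z ∈ ℂ, and suppose (1+zw)^α · e^{f(z)+g(w)} = Q(z,w)^λ holds for all (z,w) in a nonempty open subset of ℂ² containing a point of {w = z̄}, where α, λ > 0 are real, f is entire in z and g entire in w, and the powers are given by a fixed branch. If the zero set of Q in ℂ² is nonempty, then it coincides with the zero set of 1+zw. -/
open MvPolynomial Complex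

/-- Evaluation of a two-variable polynomial at a point of `ℂ²`. -/
noncomputable def eval2 (Q : MvPolynomial (Fin 2) ℂ) (p : ℂ × ℂ) : ℂ :=
  eval (fun i => if i = 0 then p.1 else p.2) Q

/-!
At the diagonal point `1 + z z̄ > 0` and `Q(z, z̄) > 0`, so nearby both bases lie in the slit
plane, where the powers are holomorphic; differentiating the identity logarithmically in `z` gives
`(αw + (1 + zw) f'(z)) Q = λ (1 + zw) ∂_z Q`,
an identity between functions analytic on all of `ℂ²`, hence valid everywhere; symmetrically in
`w` with `g`. On a line `w = const` this says that the polynomial `q = Q(·, w)` solves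
`u q = λ (1 + zw) q'` with `u` continuous; at a root of order `k ≥ 1` where `1 + zw ≠ 0` the
right side vanishes to order exactly `k - 1` and the left side to order `≥ k`, so `q = 0`.
Hence a zero of `Q` off `{1 + zw = 0}` makes `Q` vanish on its horizontal line, then on the
vertical line `z = 0`, and in particular at the origin, contradicting `Q(0, 0) > 0`.
Conversely, where `1 + zw = 0` the identity reduces to `α w Q(z, w) = 0` with `w ≠ 0`.
-/

open Polynomial Filter Topology ComplexConjugate

noncomputable def fstSlice (Q : MvPolynomial (Fin 2) ℂ) (w : ℂ) : ℂ[X] :=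
  MvPolynomial.aeval (fun i : Fin 2 => if i = 0 then Polynomial.X else Polynomial.C w) Q

@[simp]
theorem eval_fstSlice (Q : MvPolynomial (Fin 2) ℂ) (z w : ℂ) :
    (fstSlice Q w).eval z = eval2 Q (z, w) := by
  induction Q using MvPolynomial.induction_on with
  | C a => simp [fstSlice, eval2]
  | add p q hp hq => simp_all [fstSlice, eval2]
  | mul_X p i hp =>
    fin_cases i <;> simp_all [fstSlice, eval2]

theorem derivative_fstSlice (Q : MvPolynomial (Fin 2) ℂ) (w : ℂ) :
    derivative (fstSlice Q w) = fstSlice (pderiv 0 Q) w := by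
  induction Q using MvPolynomial.induction_on with
  | C a => simp [fstSlice]
  | add p q hp hq => simp_all [fstSlice]
  | mul_X p i hp =>
    fin_cases i <;> simp_all [fstSlice] <;> ring

theorem eval2_rename_swap (Q : MvPolynomial (Fin 2) ℂ) (p : ℂ × ℂ) :
    eval2 (rename (Equiv.swap 0 1) Q) p = eval2 Q p.swap := by
  simp only [eval2, eval_rename]
  congr 2
  funext i
  fin_cases i <;> simp

theorem analyticAt_eval2 (Q : MvPolynomial (Fin 2) ℂ) (p : ℂ × ℂ) :
    AnalyticAt ℂ (eval2 Q) p :=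
  AnalyticAt.aeval_mvPolynomial (A := ℂ)
    (fun i => by fin_cases i <;> simp [analyticAt_fst, analyticAt_snd]) Q

theorem mul_logDeriv_eq_of_cpow_mul_exp_eventuallyEq {b q φ : ℂ → ℂ} {b' q' φ' α lam t : ℂ}
    (hb : HasDerivAt b b' t) (hq : HasDerivAt q q' t) (hφ : HasDerivAt φ φ' t)
    (hbt : b t ∈ slitPlane) (hqt : q t ∈ slitPlane)
    (h : (fun s => b s ^ α * exp (φ s)) =ᶠ[𝓝 t] fun s => q s ^ lam) :
    (α * b' + b t * φ') * q t = lam * b t * q' := by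
  have hd := (((hb.cpow_const hbt).mul hφ.cexp).congr_of_eventuallyEq h.symm).unique
    (hq.cpow_const hqt)
  have hval : b t ^ α * exp (φ t) = q t ^ lam := h.eq_of_nhds
  have hb0 := slitPlane_ne_zero hbt
  have hq0 := slitPlane_ne_zero hqt
  have hbα : b t ^ α = b t ^ (α - 1) * b t := by
    rw [cpow_sub _ _ hb0, cpow_one, div_mul_cancel₀ _ hb0]
  have hqlam : q t ^ lam = q t ^ (lam - 1) * q t := by
    rw [cpow_sub _ _ hq0, cpow_one, div_mul_cancel₀ _ hq0]
  have hT : q t ^ lam ≠ 0 := by simp [cpow_eq_zero_iff, hq0]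
  apply mul_right_cancel₀ hT
  linear_combination (b t * q t) * hd - (α * b' * q t + b t * φ' * q t) * hval
    + (α * b' * q t * exp (φ t)) * hbα - (lam * b t * q') * hqlam

theorem Polynomial.eq_zero_of_isRoot_of_mul_eval_eq {q : ℂ[X]} {u b : ℂ → ℂ} {a : ℂ}
    (hu : ContinuousAt u a) (hb : ContinuousAt b a) (hba : b a ≠ 0)
    (hode : ∀ t, u t * q.eval t = b t * q.derivative.eval t) (ha : q.IsRoot a) : q = 0 := by
  by_contra hq
  obtain ⟨r, hfac, hndvd⟩ := q.exists_eq_pow_rootMultiplicity_mul_and_not_dvd hq a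
  obtain ⟨m, hm⟩ : ∃ m, q.rootMultiplicity a = m + 1 :=
    Nat.exists_eq_succ_of_ne_zero ((rootMultiplicity_pos hq).2 ha).ne'
  rw [hm] at hfac
  have hra : r.eval a ≠ 0 := fun h => hndvd (dvd_iff_isRoot.2 h)
  have hFG : (fun t => u t * ((t - a) * r.eval t)) =ᶠ[𝓝[≠] a]
      fun t => b t * ((m + 1) * r.eval t + (t - a) * r.derivative.eval t) := by
    filter_upwards [self_mem_nhdsWithin] with t (ht : t ≠ a)
    have h := hode t
    rw [hfac, derivative_mul, derivative_X_sub_C_pow] at h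
    simp only [eval_mul, eval_add, eval_pow, eval_sub, eval_X, eval_C, Nat.cast_add,
      Nat.cast_one, Nat.add_sub_cancel] at h
    apply mul_left_cancel₀ (pow_ne_zero m (sub_ne_zero.2 ht))
    linear_combination h
  have hm1 : (m + 1 : ℂ) ≠ 0 := by exact_mod_cast m.succ_ne_zero
  have h0 := ((ContinuousAt.eventuallyEq_nhds_iff_eventuallyEq_nhdsNE (by fun_prop)
    (by fun_prop)).1 hFG).eq_of_nhds
  simp [hba, hra, hm1] at h0

theorem logDeriv_identity_of_cpow_mul_exp_eq {Q : MvPolynomial (Fin 2) ℂ} {f g : ℂ → ℂ} {α lam : ℂ}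
    (hf : Differentiable ℂ f) {U : Set (ℂ × ℂ)} (hU : IsOpen U)
    (heq : ∀ p ∈ U, (1 + p.1 * p.2) ^ α * exp (f p.1 + g p.2) = eval2 Q p ^ lam)
    {p₀ : ℂ × ℂ} (hp₀ : p₀ ∈ U) (h1 : 1 + p₀.1 * p₀.2 ∈ slitPlane)
    (hQ : eval2 Q p₀ ∈ slitPlane) (z w : ℂ) :
    (α * w + (1 + z * w) * deriv f z) * eval2 Q (z, w) =
      lam * (1 + z * w) * eval2 (pderiv 0 Q) (z, w) := by
  have hlocal : ∀ᶠ p in 𝓝 p₀, (α * p.2 + (1 + p.1 * p.2) * deriv f p.1) * eval2 Q p =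
      lam * (1 + p.1 * p.2) * eval2 (pderiv 0 Q) p := by
    have hQcont : Continuous (eval2 Q) := continuous_iff_continuousAt.2 fun p =>
      (analyticAt_eval2 Q p).continuousAt
    filter_upwards [hU.mem_nhds hp₀, (isOpen_slitPlane.preimage hQcont).mem_nhds hQ,
      (isOpen_slitPlane.preimage (by fun_prop : Continuous fun p : ℂ × ℂ => 1 + p.1 * p.2)).mem_nhds
        h1] with ⟨z, w⟩ hzw hQzw h1zw
    have hslice : ∀ᶠ t in 𝓝 z, (t, w) ∈ U :=
      (hU.preimage (by fun_prop : Continuous fun t : ℂ => (t, w))).mem_nhds hzw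
    simpa [derivative_fstSlice] using
      mul_logDeriv_eq_of_cpow_mul_exp_eventuallyEq (b := fun t => 1 + t * w)
        (q := fun t => (fstSlice Q w).eval t) (φ := fun t => f t + g w)
        (((hasDerivAt_id z).mul_const w).const_add 1) ((fstSlice Q w).hasDerivAt z)
        ((hf z).hasDerivAt.add_const (g w)) h1zw (by simpa using hQzw)
        (hslice.mono fun t ht => by simpa using heq _ ht)
  have hf' : ∀ x, AnalyticAt ℂ (deriv f) x := fun x => (hf.analyticAt x).deriv
  have hL : AnalyticOnNhd ℂ
      (fun p : ℂ × ℂ => (α * p.2 + (1 + p.1 * p.2) * deriv f p.1) * eval2 Q p) Set.univ :=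
    fun p _ => ((analyticAt_const.mul analyticAt_snd).add ((analyticAt_const.add
      (analyticAt_fst.mul analyticAt_snd)).mul ((hf' p.1).comp analyticAt_fst))).mul
      (analyticAt_eval2 Q p)
  have hR : AnalyticOnNhd ℂ
      (fun p : ℂ × ℂ => lam * (1 + p.1 * p.2) * eval2 (pderiv 0 Q) p) Set.univ :=
    fun p _ => (analyticAt_const.mul (analyticAt_const.add
      (analyticAt_fst.mul analyticAt_snd))).mul (analyticAt_eval2 _ p)
  exact hL.eqOn_of_preconnected_of_eventuallyEq hR isPreconnected_univ (Set.mem_univ p₀) hlocal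
    (Set.mem_univ (z, w))

theorem eval2_eq_zero_of_logDeriv_identity {Q : MvPolynomial (Fin 2) ℂ} {f : ℂ → ℂ} {α lam : ℂ}
    (hf : Differentiable ℂ f) (hlam : lam ≠ 0)
    (hid : ∀ z w, (α * w + (1 + z * w) * deriv f z) * eval2 Q (z, w) =
      lam * (1 + z * w) * eval2 (pderiv 0 Q) (z, w))
    {z w : ℂ} (hQ : eval2 Q (z, w) = 0) (hzw : 1 + z * w ≠ 0) (t : ℂ) : eval2 Q (t, w) = 0 := by
  have hf' : Continuous (deriv f) := continuous_iff_continuousAt.2 fun x =>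
    (hf.analyticAt x).deriv.continuousAt
  have hslice : fstSlice Q w = 0 :=
    Polynomial.eq_zero_of_isRoot_of_mul_eval_eq (u := fun t => α * w + (1 + t * w) * deriv f t)
      (b := fun t => lam * (1 + t * w)) (a := z) (by fun_prop) (by fun_prop)
      (mul_ne_zero hlam hzw) (fun t => by simpa [derivative_fstSlice] using hid t w)
      (by simpa using hQ)
  simpa [hslice] using (eval_fstSlice Q t w).symm

theorem zero_set_eq_of_complexification_general (Q : MvPolynomial (Fin 2) ℂ)
    (hpos : ∀ z : ℂ, 0 < (eval2 Q (z, (starRingEnd ℂ) z)).re)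
    (α lam : ℝ) (hα : 0 < α) (hlam : 0 < lam)
    (f g : ℂ → ℂ) (hf : Differentiable ℂ f) (hg : Differentiable ℂ g)
    (U : Set (ℂ × ℂ)) (hU : IsOpen U)
    (hdiag : ∃ z₀ : ℂ, (z₀, (starRingEnd ℂ) z₀) ∈ U)
    (heq : ∀ p ∈ U,
      (1 + p.1 * p.2) ^ (α : ℂ) * Complex.exp (f p.1 + g p.2) =
        (eval2 Q p) ^ (lam : ℂ)) :
    {p : ℂ × ℂ | eval2 Q p = 0} = {p : ℂ × ℂ | 1 + p.1 * p.2 = 0} := by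
  obtain ⟨z₀, hz₀⟩ := hdiag
  have h1 : 1 + z₀ * conj z₀ ∈ slitPlane := by
    have : (0 : ℝ) < 1 + normSq z₀ := by linarith [normSq_nonneg z₀]
    rw [mul_conj]; exact_mod_cast ofReal_mem_slitPlane.2 this
  have hQ₀ : eval2 Q (z₀, conj z₀) ∈ slitPlane := Or.inl (hpos z₀)
  have hidQ := logDeriv_identity_of_cpow_mul_exp_eq hf hU heq hz₀ h1 hQ₀
  have hidQswap := logDeriv_identity_of_cpow_mul_exp_eq (Q := rename (Equiv.swap 0 1) Q) (g := f) hg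
    (hU.preimage continuous_swap) (p₀ := (conj z₀, z₀))
    (fun p hp => by simpa [eval2_rename_swap, mul_comm, add_comm] using heq _ hp) hz₀
    (by simpa [mul_comm] using h1) (by simpa [eval2_rename_swap] using hQ₀)
  have hlam' : (lam : ℂ) ≠ 0 := by exact_mod_cast hlam.ne'
  ext ⟨z, w⟩
  constructor
  · intro (hQ : eval2 Q (z, w) = 0)
    by_contra hzw
    have hzero_on_row : eval2 Q (0, w) = 0 :=
      eval2_eq_zero_of_logDeriv_identity hf hlam' hidQ hQ hzw 0
    have hzero_at_origin : eval2 Q (0, 0) = 0 := by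
      simpa [eval2_rename_swap] using eval2_eq_zero_of_logDeriv_identity hg hlam' hidQswap
        (z := w) (w := 0) (by simpa [eval2_rename_swap] using hzero_on_row) (by simp) 0
    simpa [hzero_at_origin] using hpos 0
  · intro (hzw : 1 + z * w = 0)
    have hw : w ≠ 0 := by rintro rfl; simp at hzw
    simpa [hzw, hα.ne', hw] using hidQ z w

/-- Complexification step: if `(1+zw)^α·e^{f(z)+g(w)} = Q(z,w)^λ` on an open set meeting
`{w = z̄}`, with `Q(z,z̄)` real positive, `α, λ > 0`, `f, g` entire, then a nonempty zero
set of `Q` in ℂ² coincides with the zero set of `1+zw`. -/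
theorem zero_set_eq_of_complexification (Q : MvPolynomial (Fin 2) ℂ)
    (hreal : ∀ z : ℂ, (eval2 Q (z, (starRingEnd ℂ) z)).im = 0)
    (hpos : ∀ z : ℂ, 0 < (eval2 Q (z, (starRingEnd ℂ) z)).re)
    (α lam : ℝ) (hα : 0 < α) (hlam : 0 < lam)
    (f g : ℂ → ℂ) (hf : Differentiable ℂ f) (hg : Differentiable ℂ g)
    (U : Set (ℂ × ℂ)) (hU : IsOpen U)
    (hdiag : ∃ z₀ : ℂ, (z₀, (starRingEnd ℂ) z₀) ∈ U)
    (heq : ∀ p ∈ U,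
      (1 + p.1 * p.2) ^ (α : ℂ) * Complex.exp (f p.1 + g p.2) =
        (eval2 Q p) ^ (lam : ℂ))
    (hne : {p : ℂ × ℂ | eval2 Q p = 0}.Nonempty) :
    {p : ℂ × ℂ | eval2 Q p = 0} = {p : ℂ × ℂ | 1 + p.1 * p.2 = 0} :=
  zero_set_eq_of_complexification_general Q hpos α lam hα hlam f g hf hg U hU hdiag heq
end
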